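/- A risk measure ρ : 𝒳 → ℝ is star-shaped if and only if there exists a collection Γ of convex risk measures on 𝒳 such that ρ(X) = min_{γ∈Γ} γ(X) for every X ∈ 𝒳 (the minimum being attained for each X). Moreover, in this case Γ can be chosen as the collection of all convex risk measures γ satisfying γ(Y) ≥ ρ(Y) for all Y ∈ 𝒳; that is, ρ is star-shaped if and only if for every X ∈ 𝒳 there exists a convex risk measure γ with γ ≥ ρ pointwise and γ(X) = ρ(X). -/

import Mathlib

open BoundedContinuousFunction

def IsRiskMeasure {Ω : Type*} [TopologicalSpace Ω] (ρ : (Ω →ᵇ ℝ) → ℝ) : Prop :=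
  (∀ X Y : Ω →ᵇ ℝ, Y ≤ X → ρ Y ≤ ρ X) ∧
  (∀ (X : Ω →ᵇ ℝ) (m : ℝ), ρ (X - const Ω m) = ρ X - m) ∧
  ρ 0 = 0

def IsStarShaped {Ω : Type*} [TopologicalSpace Ω] (ρ : (Ω →ᵇ ℝ) → ℝ) : Prop :=
  ∀ (X : Ω →ᵇ ℝ) (l : ℝ), 1 < l → l * ρ X ≤ ρ (l • X)

def IsConvex {Ω : Type*} [TopologicalSpace Ω] (ρ : (Ω →ᵇ ℝ) → ℝ) : Prop :=
  ∀ (X Y : Ω →ᵇ ℝ) (t : ℝ), t ∈ Set.Icc (0 : ℝ) 1 →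
    ρ (t • X + (1 - t) • Y) ≤ t * ρ X + (1 - t) * ρ Y

/-! Given `X`, shift it to `Z := X - ρ X`, so that `ρ Z = 0`. Star-shapedness makes every
`l • Z` with `l ∈ [0, 1]` acceptable for `ρ`, hence `ρ` lies below the risk measure
`γ Y := inf_{l ∈ [0, 1]} sup (Y - l • Z)`, whose acceptance set is generated by the segment
`[0, Z]`. This `γ` is convex because the segment is, and `γ X ≤ sup (X - Z) = ρ X`.
Conversely, a convex normalized risk measure is star-shaped, and star-shapedness passes to
pointwise minima of such majorants. -/

theorem exists_set_isLeast_iff_forall_exists_le_eq {α β : Type*} [LE β]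
    (P : (α → β) → Prop) (f : α → β) :
    (∃ Γ : Set (α → β), (∀ g ∈ Γ, P g) ∧ ∀ x, IsLeast {y | ∃ g ∈ Γ, y = g x} (f x)) ↔
      ∀ x, ∃ g, P g ∧ (∀ y, f y ≤ g y) ∧ g x = f x := by
  constructor
  · rintro ⟨Γ, hP, hleast⟩ x
    obtain ⟨g, hg, hgx⟩ := (hleast x).1
    exact ⟨g, hP g hg, fun y => (hleast y).2 ⟨g, hg, rfl⟩, hgx.symm⟩
  · intro h
    refine ⟨{g | P g ∧ ∀ y, f y ≤ g y}, fun g hg => hg.1, fun x => ⟨?_, ?_⟩⟩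
    · obtain ⟨g, hP, hle, hgx⟩ := h x
      exact ⟨g, ⟨hP, hle⟩, hgx.symm⟩
    · rintro _ ⟨g, hg, rfl⟩
      exact hg.2 x

section RiskMeasures

variable {Ω : Type*} [TopologicalSpace Ω]

noncomputable def worstCaseRisk (X : Ω →ᵇ ℝ) : ℝ := ⨆ ω, X ω

theorem BoundedContinuousFunction.bddAbove_range_apply (X : Ω →ᵇ ℝ) :
    BddAbove (Set.range X) :=
  ⟨‖X‖, by rintro _ ⟨ω, rfl⟩; exact X.apply_le_norm ω⟩

theorem apply_le_worstCaseRisk (X : Ω →ᵇ ℝ) (ω : Ω) : X ω ≤ worstCaseRisk X :=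
  le_ciSup X.bddAbove_range_apply ω

section Nonempty

variable [Nonempty Ω]

theorem worstCaseRisk_le {X : Ω →ᵇ ℝ} {c : ℝ} (h : ∀ ω, X ω ≤ c) : worstCaseRisk X ≤ c :=
  ciSup_le h

theorem worstCaseRisk_mono {X Y : Ω →ᵇ ℝ} (h : Y ≤ X) : worstCaseRisk Y ≤ worstCaseRisk X :=
  worstCaseRisk_le fun ω => (h ω).trans (apply_le_worstCaseRisk X ω)

theorem worstCaseRisk_const (m : ℝ) : worstCaseRisk (const Ω m) = m :=
  ciSup_const

theorem worstCaseRisk_sub_const (X : Ω →ᵇ ℝ) (m : ℝ) :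
    worstCaseRisk (X - const Ω m) = worstCaseRisk X - m :=
  (ciSup_sub X.bddAbove_range_apply m).symm

theorem isConvex_worstCaseRisk : IsConvex (worstCaseRisk : (Ω →ᵇ ℝ) → ℝ) := by
  rintro X Y t ⟨ht0, ht1⟩
  refine worstCaseRisk_le fun ω => ?_
  have hX := mul_le_mul_of_nonneg_left (apply_le_worstCaseRisk X ω) ht0
  have hY := mul_le_mul_of_nonneg_left (apply_le_worstCaseRisk Y ω) (sub_nonneg.2 ht1)
  simpa using add_le_add hX hY

end Nonempty

theorem IsRiskMeasure.le_add_worstCaseRisk_sub {ρ : (Ω →ᵇ ℝ) → ℝ} (hρ : IsRiskMeasure ρ)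
    (X Y : Ω →ᵇ ℝ) : ρ X ≤ ρ Y + worstCaseRisk (X - Y) := by
  obtain ⟨hmono, hcash, -⟩ := hρ
  have hle : X ≤ Y - const Ω (-worstCaseRisk (X - Y)) := fun ω => by
    have h := apply_le_worstCaseRisk (X - Y) ω
    change X ω ≤ (Y - const Ω (-worstCaseRisk (X - Y))) ω
    simp only [coe_sub, Pi.sub_apply, const_apply] at h ⊢
    linarith
  simpa [hcash] using hmono _ _ hle

theorem IsStarShaped.apply_smul_le {ρ : (Ω →ᵇ ℝ) → ℝ} (hs : IsStarShaped ρ) (h0 : ρ 0 = 0)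
    {l : ℝ} (hl : l ∈ Set.Icc (0 : ℝ) 1) (X : Ω →ᵇ ℝ) : ρ (l • X) ≤ l * ρ X := by
  obtain ⟨hl0, hl1⟩ := hl
  rcases hl0.eq_or_lt with rfl | hpos
  · simp [h0]
  rcases hl1.eq_or_lt with rfl | hlt
  · simp
  have h := hs (l • X) l⁻¹ (one_lt_inv₀ hpos |>.2 hlt)
  rw [smul_smul, inv_mul_cancel₀ hpos.ne', one_smul] at h
  calc ρ (l • X) = l * (l⁻¹ * ρ (l • X)) := by field_simp
    _ ≤ l * ρ X := mul_le_mul_of_nonneg_left h hpos.le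

theorem IsConvex.isStarShaped {γ : (Ω →ᵇ ℝ) → ℝ} (hγ : IsConvex γ) (h0 : γ 0 = 0) :
    IsStarShaped γ := by
  intro X l hl
  have hpos : 0 < l := one_pos.trans hl
  have h := hγ (l • X) 0 l⁻¹ ⟨inv_nonneg.2 hpos.le, inv_le_one_of_one_le₀ hl.le⟩
  rw [smul_smul, inv_mul_cancel₀ hpos.ne', one_smul, smul_zero, add_zero, h0, mul_zero,
    add_zero] at h
  calc l * γ X ≤ l * (l⁻¹ * γ (l • X)) := mul_le_mul_of_nonneg_left h hpos.le
    _ = γ (l • X) := by field_simp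

theorem isStarShaped_of_forall_exists_le_eq {ρ : (Ω →ᵇ ℝ) → ℝ}
    (h : ∀ X, ∃ γ, IsStarShaped γ ∧ (∀ Y, ρ Y ≤ γ Y) ∧ γ X = ρ X) : IsStarShaped ρ := by
  intro X l hl
  obtain ⟨γ, hγ, hle, heq⟩ := h (l • X)
  calc l * ρ X ≤ l * γ X := mul_le_mul_of_nonneg_left (hle X) (one_pos.trans hl).le
    _ ≤ γ (l • X) := hγ X l hl
    _ = ρ (l • X) := heq

noncomputable def segmentRisk (Z Y : Ω →ᵇ ℝ) : ℝ :=
  ⨅ l : Set.Icc (0 : ℝ) 1, worstCaseRisk (Y - (l : ℝ) • Z)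

namespace segmentRisk

variable [Nonempty Ω] (Z : Ω →ᵇ ℝ)

theorem bddBelow (Y : Ω →ᵇ ℝ) :
    BddBelow (Set.range fun l : Set.Icc (0 : ℝ) 1 => worstCaseRisk (Y - (l : ℝ) • Z)) := by
  obtain ⟨ω⟩ := ‹Nonempty Ω›
  refine ⟨Y ω - |Z ω|, ?_⟩
  rintro _ ⟨⟨l, hl0, hl1⟩, rfl⟩
  have hlZ : l * Z ω ≤ |Z ω| := by nlinarith [le_abs_self (Z ω), abs_nonneg (Z ω)]
  have := apply_le_worstCaseRisk (Y - l • Z) ω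
  simp only [coe_sub, coe_smul, Pi.sub_apply, smul_eq_mul] at this
  linarith

theorem le_worstCaseRisk (Y : Ω →ᵇ ℝ) {l : ℝ} (hl : l ∈ Set.Icc (0 : ℝ) 1) :
    segmentRisk Z Y ≤ worstCaseRisk (Y - l • Z) :=
  ciInf_le (bddBelow Z Y) ⟨l, hl⟩

theorem isRiskMeasure (h0 : 0 ≤ segmentRisk Z 0) : IsRiskMeasure (segmentRisk Z) := by
  refine ⟨fun X Y hYX => ?_, fun Y m => ?_, ?_⟩
  · exact ciInf_mono (bddBelow Z Y) fun l => worstCaseRisk_mono (sub_le_sub_right hYX _)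
  · simp only [segmentRisk, sub_right_comm _ (const Ω m), worstCaseRisk_sub_const]
    exact (ciInf_sub (bddBelow Z Y) m).symm
  · refine le_antisymm ?_ h0
    exact (le_worstCaseRisk Z 0 (l := 0) ⟨le_rfl, zero_le_one⟩).trans
      (worstCaseRisk_le fun ω => by simp)

theorem isConvex : IsConvex (segmentRisk Z) := by
  rintro X Y t ⟨ht0, ht1⟩
  unfold segmentRisk
  rw [Real.mul_iInf_of_nonneg ht0, Real.mul_iInf_of_nonneg (sub_nonneg.2 ht1)]
  refine le_ciInf_add_ciInf fun l₁ l₂ => ?_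
  have hl : t * l₁ + (1 - t) * l₂ ∈ Set.Icc (0 : ℝ) 1 :=
    convex_Icc 0 1 l₁.2 l₂.2 ht0 (sub_nonneg.2 ht1) (by ring)
  have hcomb : t • X + (1 - t) • Y - (t * l₁ + (1 - t) * l₂) • Z =
      t • (X - (l₁ : ℝ) • Z) + (1 - t) • (Y - (l₂ : ℝ) • Z) := by
    ext ω
    simp only [coe_sub, coe_add, coe_smul, Pi.sub_apply, Pi.add_apply, smul_eq_mul]
    ring
  calc segmentRisk Z (t • X + (1 - t) • Y)
      ≤ worstCaseRisk (t • X + (1 - t) • Y - (t * l₁ + (1 - t) * l₂) • Z) :=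
        le_worstCaseRisk Z _ hl
    _ ≤ _ := hcomb ▸ isConvex_worstCaseRisk _ _ t ⟨ht0, ht1⟩

end segmentRisk

theorem IsStarShaped.le_segmentRisk [Nonempty Ω] {ρ : (Ω →ᵇ ℝ) → ℝ} (hs : IsStarShaped ρ)
    (hρ : IsRiskMeasure ρ) {Z : Ω →ᵇ ℝ} (hZ : ρ Z ≤ 0) (Y : Ω →ᵇ ℝ) :
    ρ Y ≤ segmentRisk Z Y := by
  refine le_ciInf fun ⟨l, hl⟩ => ?_
  have hlZ : ρ (l • Z) ≤ 0 :=
    (hs.apply_smul_le hρ.2.2 hl Z).trans (mul_nonpos_of_nonneg_of_nonpos hl.1 hZ)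
  linarith [hρ.le_add_worstCaseRisk_sub Y (l • Z)]

theorem IsStarShaped.exists_convex_le_eq [Nonempty Ω] {ρ : (Ω →ᵇ ℝ) → ℝ}
    (hs : IsStarShaped ρ) (hρ : IsRiskMeasure ρ) (X : Ω →ᵇ ℝ) :
    ∃ γ, IsRiskMeasure γ ∧ IsConvex γ ∧ (∀ Y, ρ Y ≤ γ Y) ∧ γ X = ρ X := by
  set Z := X - const Ω (ρ X)
  have hle : ∀ Y, ρ Y ≤ segmentRisk Z Y :=
    hs.le_segmentRisk hρ (by simp [Z, hρ.2.1])
  refine ⟨segmentRisk Z, segmentRisk.isRiskMeasure Z (hρ.2.2 ▸ hle 0),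
    segmentRisk.isConvex Z, hle, le_antisymm ?_ (hle X)⟩
  simpa [Z, worstCaseRisk_const] using
    segmentRisk.le_worstCaseRisk Z X (l := 1) ⟨zero_le_one, le_rfl⟩

end RiskMeasures

theorem star_shaped_iff_min_of_convex_general
    {Ω : Type*} [TopologicalSpace Ω] [Nonempty Ω]
    (ρ : (Ω →ᵇ ℝ) → ℝ) (hρ : IsRiskMeasure ρ) :
    (IsStarShaped ρ ↔
      ∃ Γ : Set ((Ω →ᵇ ℝ) → ℝ),
        (∀ γ ∈ Γ, IsRiskMeasure γ ∧ IsConvex γ) ∧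
        ∀ X : Ω →ᵇ ℝ, IsLeast {y : ℝ | ∃ γ ∈ Γ, y = γ X} (ρ X)) ∧
    (IsStarShaped ρ ↔
      ∀ X : Ω →ᵇ ℝ, ∃ γ : (Ω →ᵇ ℝ) → ℝ,
        IsRiskMeasure γ ∧ IsConvex γ ∧ (∀ Y : Ω →ᵇ ℝ, ρ Y ≤ γ Y) ∧ γ X = ρ X) := by
  have hpointwise : IsStarShaped ρ ↔ ∀ X, ∃ γ, IsRiskMeasure γ ∧ IsConvex γ ∧
      (∀ Y, ρ Y ≤ γ Y) ∧ γ X = ρ X :=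
    ⟨fun hs => hs.exists_convex_le_eq hρ, fun h => isStarShaped_of_forall_exists_le_eq fun X =>
      let ⟨γ, hγ, hconv, hle, heq⟩ := h X
      ⟨γ, hconv.isStarShaped hγ.2.2, hle, heq⟩⟩
  refine ⟨hpointwise.trans ?_, hpointwise⟩
  simpa only [and_assoc] using
    (exists_set_isLeast_iff_forall_exists_le_eq (fun γ => IsRiskMeasure γ ∧ IsConvex γ) ρ).symm

theorem star_shaped_iff_min_of_convex
    {Ω : Type*} [TopologicalSpace Ω] [DiscreteTopology Ω] [Nonempty Ω]
    (ρ : (Ω →ᵇ ℝ) → ℝ) (hρ : IsRiskMeasure ρ) :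
    (IsStarShaped ρ ↔
      ∃ Γ : Set ((Ω →ᵇ ℝ) → ℝ),
        (∀ γ ∈ Γ, IsRiskMeasure γ ∧ IsConvex γ) ∧
        ∀ X : Ω →ᵇ ℝ, IsLeast {y : ℝ | ∃ γ ∈ Γ, y = γ X} (ρ X)) ∧
    (IsStarShaped ρ ↔
      ∀ X : Ω →ᵇ ℝ, ∃ γ : (Ω →ᵇ ℝ) → ℝ,
        IsRiskMeasure γ ∧ IsConvex γ ∧ (∀ Y : Ω →ᵇ ℝ, ρ Y ≤ γ Y) ∧ γ X = ρ X) :=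
  star_shaped_iff_min_of_convex_general ρ hρ
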